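/- arXiv:1302.6225 — 3 statements merged into one kernel-verified Lean document; each statement's English description precedes it below -/
import Mathlib

section
/- The sum over all d-partitions λ of n of the square of the number of standard d-tableaux of shape λ equals d^n · n!. -/
open Finset Nat

/-- A `d`-partition of `n`: a `d`-tuple of partitions (each given by its antitone sequence of
row lengths, 0-indexed, vanishing from row `n` on) whose sizes add up to `n`. -/
structure DPartition (d n : ℕ) where
  part : Fin d → ℕ → ℕ
  antitone : ∀ k, Antitone (part k)
  vanish : ∀ k i, n ≤ i → part k i = 0
  size : ∑ k : Fin d, ∑ i ∈ Finset.range n, part k i = n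

/-- A standard `d`-tableau of shape `lam`: a filling of the nodes of `lam` by `1,…,n`, each
used exactly once, increasing along rows and down columns of every component (the value `0`
is assigned to non-nodes, so that a tableau is determined by its entries on the nodes). -/
structure StdDTableau (d n : ℕ) (lam : DPartition d n) where
  entry : Fin d → ℕ → ℕ → ℕ
  outside : ∀ k x y, ¬ y < lam.part k x → entry k x y = 0
  mem : ∀ k x y, y < lam.part k x → entry k x y ∈ Finset.Icc 1 n
  inj : ∀ k x y k' x' y', y < lam.part k x → y' < lam.part k' x' →
      entry k x y = entry k' x' y' → (k, x, y) = (k', x', y')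
  surj : ∀ m ∈ Finset.Icc 1 n, ∃ k x y, y < lam.part k x ∧ entry k x y = m
  row : ∀ k x y, y + 1 < lam.part k x → entry k x y < entry k x (y + 1)
  col : ∀ k x y, y < lam.part k (x + 1) → entry k x y < entry k (x + 1) y

/-!
Encode a `d`-partition by its set of cells `(k, x, y)`. Standard tableaux of shape `S` are then
counted by `f(S) = ∑_{c corner of S} f(S ∖ c)`, removing the cell with the largest entry.
The heart of the proof is the identity `∑_{b addable to S} f(S ∪ b) = d (|S| + 1) f(S)`, a shadow
of the relation `DU - UD = d` between the down and up operators on the lattice of `d`-tuples of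
Young diagrams. It follows by induction on `|S|` from the fact that a `d`-tuple of partitions has
exactly `d` more addable than removable cells. Writing `f(S)² = ∑_{c ∈ S} f(S) f(S ∖ c)` and
regrouping by `U = S ∖ c` then gives `∑_{|S| = n+1} f(S)² = d (n+1) ∑_{|U| = n} f(U)²`.
-/

-- `(k, x, y)` is the node in row `x`, column `y` of the `k`-th diagram.
abbrev Cell (d : ℕ) := Fin d × ℕ × ℕ

section Young

variable {d : ℕ}

def IsYoung (S : Finset (Cell d)) : Prop :=
  ∀ c ∈ S, ∀ x ≤ c.2.1, ∀ y ≤ c.2.2, (c.1, x, y) ∈ S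

instance : DecidablePred (IsYoung (d := d)) := fun S => by
  unfold IsYoung; infer_instance

theorem IsYoung.mem {S : Finset (Cell d)} (hS : IsYoung S) {k : Fin d} {x y x' y' : ℕ}
    (h : (k, x, y) ∈ S) (hx : x' ≤ x) (hy : y' ≤ y) : (k, x', y') ∈ S :=
  hS _ h x' hx y' hy

theorem isYoung_empty : IsYoung (∅ : Finset (Cell d)) := by
  simp [IsYoung]

theorem IsYoung.inter {S T : Finset (Cell d)} (hS : IsYoung S) (hT : IsYoung T) :
    IsYoung (S ∩ T) := by
  rintro ⟨k, x, y⟩ hc x' hx y' hy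
  rw [mem_inter] at hc ⊢
  exact ⟨hS.mem hc.1 hx hy, hT.mem hc.2 hx hy⟩

theorem IsYoung.union {S T : Finset (Cell d)} (hS : IsYoung S) (hT : IsYoung T) :
    IsYoung (S ∪ T) := by
  rintro ⟨k, x, y⟩ hc x' hx y' hy
  rw [mem_union] at hc ⊢
  exact hc.imp (hS.mem · hx hy) (hT.mem · hx hy)

theorem IsYoung.lt_card {S : Finset (Cell d)} (hS : IsYoung S) {k : Fin d} {x y : ℕ}
    (h : (k, x, y) ∈ S) : x < #S ∧ y < #S := by
  have hx := card_le_card_of_injOn (s := range (x + 1)) (fun i => ((k, i, y) : Cell d))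
    (fun i hi => hS.mem h (by simp at hi; omega) le_rfl) (fun i _ j _ hij => by simpa using hij)
  have hy := card_le_card_of_injOn (s := range (y + 1)) (fun j => ((k, x, j) : Cell d))
    (fun j hj => hS.mem h le_rfl (by simp at hj; omega)) (fun i _ j _ hij => by simpa using hij)
  simp only [card_range] at hx hy
  omega

def cellBox (d N : ℕ) : Finset (Cell d) := univ ×ˢ range N ×ˢ range N

theorem mem_cellBox {N : ℕ} {c : Cell d} : c ∈ cellBox d N ↔ c.2.1 < N ∧ c.2.2 < N := by
  simp [cellBox]

theorem cellBox_mono {N N' : ℕ} (h : N ≤ N') : cellBox d N ⊆ cellBox d N' := fun _ hc => by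
  rw [mem_cellBox] at hc ⊢
  omega

theorem IsYoung.subset_cellBox {S : Finset (Cell d)} (hS : IsYoung S) : S ⊆ cellBox d #S :=
  fun _ h => mem_cellBox.2 (hS.lt_card h)

def corners (S : Finset (Cell d)) : Finset (Cell d) :=
  S.filter fun b => IsYoung (S.erase b)

def addables (S : Finset (Cell d)) : Finset (Cell d) :=
  (cellBox d (#S + 1)).filter fun b => b ∉ S ∧ IsYoung (insert b S)

theorem mem_corners {S : Finset (Cell d)} {b : Cell d} :
    b ∈ corners S ↔ b ∈ S ∧ IsYoung (S.erase b) :=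
  mem_filter

theorem mem_addables {S : Finset (Cell d)} {b : Cell d} :
    b ∈ addables S ↔ b ∉ S ∧ IsYoung (insert b S) := by
  refine ⟨fun h => (mem_filter.1 h).2, fun h => mem_filter.2 ⟨?_, h⟩⟩
  have := (card_insert_of_notMem h.1).symm ▸ h.2.subset_cellBox (mem_insert_self b S)
  exact this

end Young

section RowLength

variable {d : ℕ} {S : Finset (Cell d)}

def rowLen (S : Finset (Cell d)) (k : Fin d) (x : ℕ) : ℕ :=
  #{y ∈ range #S | (k, x, y) ∈ S}

theorem rowLen_le_card (k : Fin d) (x : ℕ) : rowLen S k x ≤ #S :=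
  (card_filter_le _ _).trans (card_range _).le

theorem IsYoung.mem_iff_lt_rowLen (hS : IsYoung S) {k : Fin d} {x y : ℕ} :
    (k, x, y) ∈ S ↔ y < rowLen S k x := by
  constructor
  · intro h
    have : range (y + 1) ⊆ {z ∈ range #S | (k, x, z) ∈ S} := fun z hz => by
      rw [mem_range] at hz
      exact mem_filter.2 ⟨mem_range.2 (by have := (hS.lt_card h).2; omega),
        hS.mem h le_rfl (by omega)⟩
    have := card_le_card this
    rw [card_range] at this
    exact this
  · intro hy
    by_contra h
    have : {z ∈ range #S | (k, x, z) ∈ S} ⊆ range y := fun z hz => by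
      rw [mem_filter] at hz
      by_contra hzy
      exact h (hS.mem hz.2 le_rfl (by simp at hzy; omega))
    have := card_le_card this
    rw [card_range] at this
    exact absurd hy (not_lt.2 this)

theorem IsYoung.rowLen_antitone (hS : IsYoung S) (k : Fin d) : Antitone (rowLen S k) :=
  fun _ _ hx => card_le_card fun _ hy => by
    rw [mem_filter] at hy ⊢
    exact ⟨hy.1, hS.mem hy.2 hx le_rfl⟩

theorem IsYoung.mem_addables_iff (hS : IsYoung S) {k : Fin d} {x y : ℕ} :
    (k, x, y) ∈ addables S ↔
      y = rowLen S k x ∧ (x = 0 ∨ rowLen S k x < rowLen S k (x - 1)) := by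
  have hL := fun {k x y} => hS.mem_iff_lt_rowLen (k := k) (x := x) (y := y)
  have hanti := hS.rowLen_antitone k
  rw [mem_addables]
  constructor
  · rintro ⟨hb, hY⟩
    have hle : rowLen S k x ≤ y := not_lt.1 (hL.not.1 hb)
    have hge : y ≤ rowLen S k x := by
      by_contra! hlt
      have := hY.mem (mem_insert_self _ _) le_rfl hlt.le
      rw [mem_insert, hL] at this
      simp at this
      omega
    refine ⟨le_antisymm hge hle, ?_⟩
    rcases Nat.eq_zero_or_pos x with hx | hx
    · exact Or.inl hx
    · have := hY.mem (mem_insert_self _ _) (Nat.sub_le x 1) le_rfl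
      rw [mem_insert, hL] at this
      simp at this
      omega
  · rintro ⟨rfl, hrow⟩
    refine ⟨by rw [hL]; exact lt_irrefl _, ?_⟩
    rintro ⟨k', x', y'⟩ hc x'' hx y'' hy
    simp only at hx hy ⊢
    rcases mem_insert.1 hc with hc | hc
    · simp only [Prod.mk.injEq] at hc
      obtain ⟨rfl, rfl, rfl⟩ := hc
      rw [mem_insert, hL]
      by_cases h : y'' < rowLen S k' x''
      · exact Or.inr h
      · have := hanti hx
        rcases hx.lt_or_eq with hx | rfl
        · have := hanti (show x'' ≤ x' - 1 by omega)
          omega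
        · left; simp; omega
    · exact mem_insert_of_mem (hS.mem hc hx hy)

theorem IsYoung.mem_corners_iff (hS : IsYoung S) {k : Fin d} {x y : ℕ} :
    (k, x, y) ∈ corners S ↔ y + 1 = rowLen S k x ∧ rowLen S k (x + 1) < rowLen S k x := by
  have hL := fun {k x y} => hS.mem_iff_lt_rowLen (k := k) (x := x) (y := y)
  have hanti := hS.rowLen_antitone k
  rw [mem_corners]
  constructor
  · rintro ⟨hb, hY⟩
    rw [hL] at hb
    have hcell : ∀ {x' y'}, x ≤ x' → y ≤ y' → (k, x', y') ∈ S → (x', y') = (x, y) := by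
      intro x' y' hx hy h
      by_contra hne
      have := hY.mem (mem_erase.2 ⟨by simpa [Prod.ext_iff] using hne, h⟩) hx hy
      simp at this
    have h1 := @hcell x (y + 1) le_rfl (Nat.le_succ y)
    have h2 := @hcell (x + 1) y (Nat.le_succ x) le_rfl
    simp only [hL, Prod.mk.injEq] at h1 h2
    omega
  · rintro ⟨hy, hrow⟩
    refine ⟨hL.2 (by omega), ?_⟩
    rintro ⟨k', x', y'⟩ hc x'' hx y'' hy'
    simp only at hx hy' ⊢
    obtain ⟨hne, hcS⟩ := mem_erase.1 hc
    refine mem_erase.2 ⟨?_, hS.mem hcS hx hy'⟩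
    intro heq
    simp only [Prod.mk.injEq] at heq
    obtain ⟨rfl, rfl, rfl⟩ := heq
    rw [hL] at hcS
    rcases hx.lt_or_eq with hx | rfl
    · have := hanti (show x'' + 1 ≤ x' by omega)
      omega
    · exact hne (by simp; omega)

end RowLength

section CornerCount

variable {d : ℕ} {S : Finset (Cell d)}

theorem card_eq_sum_card_of_mem_iff {T : Finset (Cell d)} {R : Fin d → Finset ℕ}
    {f : Fin d → ℕ → ℕ} (h : ∀ k x y, (k, x, y) ∈ T ↔ x ∈ R k ∧ y = f k x) :
    #T = ∑ k, #(R k) := by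
  rw [← card_sigma]
  refine card_nbij' (fun c => ⟨c.1, c.2.1⟩) (fun p => (p.1, p.2, f p.1 p.2)) ?_ ?_ ?_ ?_
  · rintro ⟨k, x, y⟩ hc
    simpa using ((h k x y).1 hc).1
  · rintro ⟨k, x⟩ hp
    simpa [h] using hp
  · rintro ⟨k, x, y⟩ hc
    simp [((h k x y).1 hc).2]
  · rintro ⟨k, x⟩ -
    rfl

theorem card_filter_range_add_one_eq_zero_or (q : ℕ → Prop) [DecidablePred q] (N : ℕ) :
    #{x ∈ range (N + 1) | x = 0 ∨ q x} = #{x ∈ range N | q (x + 1)} + 1 := by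
  rw [range_add_one', filter_insert, if_pos (Or.inl rfl), card_insert_of_notMem (by simp),
    filter_map, card_map]
  simp
  rfl

theorem IsYoung.card_addables (hS : IsYoung S) : #(addables S) = #(corners S) + d := by
  have hrow : ∀ {k x}, 0 < rowLen S k x → x < #S := fun h =>
    (hS.lt_card (hS.mem_iff_lt_rowLen.2 h)).1
  have hA : #(addables S) =
      ∑ k, #{x ∈ range (#S + 1) | x = 0 ∨ rowLen S k x < rowLen S k (x - 1)} := by
    refine card_eq_sum_card_of_mem_iff (f := rowLen S) fun k x y => ?_
    rw [hS.mem_addables_iff, mem_filter, mem_range]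
    constructor
    · rintro ⟨rfl, h⟩
      refine ⟨⟨?_, h⟩, rfl⟩
      rcases h with h | h
      · omega
      · have := hrow (k := k) (x := x - 1) (by omega)
        omega
    · exact fun ⟨⟨_, h⟩, hy⟩ => ⟨hy, h⟩
  have hC : #(corners S) = ∑ k, #{x ∈ range #S | rowLen S k (x + 1) < rowLen S k x} := by
    refine card_eq_sum_card_of_mem_iff (f := fun k x => rowLen S k x - 1) fun k x y => ?_
    rw [hS.mem_corners_iff, mem_filter, mem_range]
    constructor
    · rintro ⟨hy, h⟩
      exact ⟨⟨hrow (k := k) (by omega), h⟩, by omega⟩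
    · rintro ⟨⟨_, h⟩, hy⟩
      exact ⟨by omega, h⟩
  simp only [hA, hC, card_filter_range_add_one_eq_zero_or, Nat.add_sub_cancel, sum_add_distrib,
    sum_const, Finset.card_univ, Fintype.card_fin, smul_eq_mul, mul_one]

end CornerCount

section Chains

variable {d : ℕ} {S : Finset (Cell d)} {m : ℕ}

-- The number of chains `∅ = S₀ ⊂ S₁ ⊂ ⋯ ⊂ Sₘ = S` of Young sets with `#Sᵢ = i`.
def numChains : ℕ → Finset (Cell d) → ℕ
  | 0, S => if S = ∅ then 1 else 0
  | m + 1, S => if IsYoung S then ∑ b ∈ S, numChains m (S.erase b) else 0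

theorem isYoung_and_card_of_numChains_ne_zero (h : numChains m S ≠ 0) : IsYoung S ∧ #S = m := by
  induction m generalizing S with
  | zero =>
    rw [numChains] at h
    split_ifs at h with hS
    · exact ⟨hS ▸ isYoung_empty, hS ▸ card_empty⟩
    · exact absurd rfl h
  | succ m ih =>
    rw [numChains] at h
    split_ifs at h with hS
    · obtain ⟨b, hb, hne⟩ := exists_ne_zero_of_sum_ne_zero h
      have := (ih hne).2
      rw [card_erase_of_mem hb] at this
      have := card_pos.2 ⟨b, hb⟩
      exact ⟨hS, by omega⟩
    · exact absurd rfl h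

theorem IsYoung.numChains_succ (hS : IsYoung S) :
    numChains (m + 1) S = ∑ c ∈ corners S, numChains m (S.erase c) := by
  rw [numChains, if_pos hS, corners, sum_filter_of_ne]
  exact fun c _ h => (isYoung_and_card_of_numChains_ne_zero h).1

theorem numChains_insert {b : Cell d} (hb : b ∉ S) (hY : IsYoung (insert b S)) :
    numChains (m + 1) (insert b S) =
      numChains m S + ∑ c ∈ S, numChains m ((insert b S).erase c) := by
  rw [numChains, if_pos hY, sum_insert hb, erase_insert hb]

theorem IsYoung.sum_addables_sum_erase {M : Type*} [AddCommMonoid M] (hS : IsYoung S)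
    {g : Finset (Cell d) → M}
    (hg : ∀ T, g T ≠ 0 → IsYoung T) :
    ∑ b ∈ addables S, ∑ c ∈ S, g ((insert b S).erase c) =
      ∑ c ∈ corners S, ∑ b ∈ (addables (S.erase c)).erase c, g (insert b (S.erase c)) := by
  have hpairs : ∀ b c, b ∈ addables S ∧ c ∈ {c ∈ S | IsYoung ((insert b S).erase c)} ↔
      b ∈ (addables (S.erase c)).erase c ∧ c ∈ corners S := by
    intro b c
    simp only [mem_filter, mem_erase, mem_addables, mem_corners]
    constructor
    · rintro ⟨⟨hb, hbY⟩, hc, hY⟩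
      have hbc : b ≠ c := fun h => hb (h ▸ hc)
      have hsplit : S.erase c = S ∩ (insert b S).erase c := by
        ext; simp only [mem_erase, mem_inter, mem_insert]; tauto
      rw [← erase_insert_of_ne hbc]
      exact ⟨⟨hbc, fun h => hb h.2, hY⟩, hc, hsplit ▸ hS.inter hY⟩
    · rintro ⟨⟨hbc, hb, hbY⟩, hc, hcY⟩
      have hbS : b ∉ S := fun h => hb ⟨hbc, h⟩
      have hsplit : insert b S = insert b (S.erase c) ∪ S := by
        ext; simp only [mem_erase, mem_union, mem_insert]; tauto
      rw [erase_insert_of_ne hbc]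
      exact ⟨⟨hbS, hsplit ▸ hbY.union hS⟩, hc, hbY⟩
  calc ∑ b ∈ addables S, ∑ c ∈ S, g ((insert b S).erase c)
      = ∑ b ∈ addables S, ∑ c ∈ {c ∈ S | IsYoung ((insert b S).erase c)},
          g ((insert b S).erase c) :=
        sum_congr rfl fun _ _ => (sum_filter_of_ne fun _ _ h => hg _ h).symm
    _ = ∑ c ∈ corners S, ∑ b ∈ (addables (S.erase c)).erase c, g ((insert b S).erase c) :=
        sum_comm' hpairs
    _ = _ := sum_congr rfl fun _ _ => sum_congr rfl fun _ hb => by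
        rw [erase_insert_of_ne (ne_of_mem_erase hb)]

theorem IsYoung.sum_addables_numChains (hS : IsYoung S) (hm : #S = m) :
    ∑ b ∈ addables S, numChains (m + 1) (insert b S) = d * (m + 1) * numChains m S := by
  induction m generalizing S with
  | zero =>
    obtain rfl := card_eq_zero.1 hm
    have hone : ∀ b ∈ addables (∅ : Finset (Cell d)), numChains 1 (insert b ∅) = 1 := by
      intro b hb
      rw [numChains_insert (notMem_empty b) (mem_addables.1 hb).2]
      simp [numChains]
    have hcorners : corners (∅ : Finset (Cell d)) = ∅ := filter_empty _
    rw [sum_congr rfl hone, sum_const, isYoung_empty.card_addables, hcorners]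
    simp [numChains]
  | succ m ih =>
    have hexpand : ∀ b ∈ addables S, numChains (m + 1 + 1) (insert b S) =
        numChains (m + 1) S + ∑ c ∈ S, numChains (m + 1) ((insert b S).erase c) :=
      fun b hb => numChains_insert (mem_addables.1 hb).1 (mem_addables.1 hb).2
    have hcorner : ∀ c ∈ corners S,
        ∑ b ∈ (addables (S.erase c)).erase c, numChains (m + 1) (insert b (S.erase c)) +
          numChains (m + 1) S = d * (m + 1) * numChains m (S.erase c) := by
      intro c hc
      obtain ⟨hcS, hY⟩ := mem_corners.1 hc
      have hcA : c ∈ addables (S.erase c) :=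
        mem_addables.2 ⟨notMem_erase c S, (insert_erase hcS).symm ▸ hS⟩
      rw [← ih hY (by rw [card_erase_of_mem hcS, hm]; rfl), ← add_sum_erase _ _ hcA,
        insert_erase hcS, add_comm]
    calc ∑ b ∈ addables S, numChains (m + 1 + 1) (insert b S)
        = #(addables S) * numChains (m + 1) S +
            ∑ b ∈ addables S, ∑ c ∈ S, numChains (m + 1) ((insert b S).erase c) := by
          rw [sum_congr rfl hexpand, sum_add_distrib, sum_const, smul_eq_mul]
      _ = d * numChains (m + 1) S + ∑ c ∈ corners S,
            (∑ b ∈ (addables (S.erase c)).erase c, numChains (m + 1) (insert b (S.erase c)) +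
              numChains (m + 1) S) := by
          rw [hS.card_addables, hS.sum_addables_sum_erase fun _ h =>
            (isYoung_and_card_of_numChains_ne_zero h).1, sum_add_distrib, sum_const, smul_eq_mul]
          ring
      _ = d * (m + 1 + 1) * numChains (m + 1) S := by
          rw [sum_congr rfl hcorner, ← mul_sum, ← hS.numChains_succ]
          ring

end Chains

theorem sum_powerset_sum_mem {α M : Type*} [DecidableEq α] [AddCommMonoid M] (s : Finset α)
    (f : Finset α → α → M) :
    ∑ t ∈ s.powerset, ∑ a ∈ t, f t a = ∑ t ∈ s.powerset, ∑ a ∈ s \ t, f (insert a t) a := by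
  rw [sum_sigma', sum_sigma']
  refine sum_nbij' (fun p => ⟨p.1.erase p.2, p.2⟩) (fun p => ⟨insert p.2 p.1, p.2⟩)
    ?_ ?_ ?_ ?_ ?_
  · rintro ⟨t, a⟩ h
    simp only [mem_sigma, mem_powerset, mem_sdiff] at h ⊢
    exact ⟨(erase_subset a t).trans h.1, h.1 h.2, notMem_erase a t⟩
  · rintro ⟨t, a⟩ h
    simp only [mem_sigma, mem_powerset, mem_sdiff] at h ⊢
    exact ⟨insert_subset h.2.1 h.1, mem_insert_self a t⟩
  · rintro ⟨t, a⟩ h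
    simp only [mem_sigma] at h
    simp [insert_erase h.2]
  · rintro ⟨t, a⟩ h
    simp only [mem_sigma, mem_sdiff] at h
    simp [erase_insert h.2.2]
  · rintro ⟨t, a⟩ h
    simp only [mem_sigma] at h
    simp [insert_erase h.2]

section SumOfSquares

variable {d : ℕ}

theorem numChains_succ_sq (n : ℕ) (S : Finset (Cell d)) :
    numChains (n + 1) S ^ 2 = ∑ b ∈ S, numChains (n + 1) S * numChains n (S.erase b) := by
  by_cases hS : IsYoung S
  · rw [sq, ← mul_sum]
    nth_rw 2 [numChains]
    rw [if_pos hS]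
  · simp [numChains, hS]

theorem sum_sdiff_numChains_insert {n : ℕ} {U : Finset (Cell d)} (h : numChains n U ≠ 0) :
    ∑ b ∈ cellBox d (n + 1) \ U, numChains (n + 1) (insert b U) = d * (n + 1) * numChains n U := by
  obtain ⟨hY, rfl⟩ := isYoung_and_card_of_numChains_ne_zero h
  rw [← hY.sum_addables_numChains rfl]
  refine (sum_subset (fun b hb => mem_sdiff.2 ⟨(mem_filter.1 hb).1, (mem_addables.1 hb).1⟩)
    fun b hb hbA => ?_).symm
  by_contra hne
  exact hbA (mem_addables.2 ⟨(mem_sdiff.1 hb).2, (isYoung_and_card_of_numChains_ne_zero hne).1⟩)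

theorem sum_sq_numChains (n : ℕ) :
    ∑ S ∈ (cellBox d n).powerset, numChains n S ^ 2 = d ^ n * n ! := by
  induction n with
  | zero => simp [cellBox, numChains]
  | succ n ih =>
    have hsupp : ∑ U ∈ (cellBox d (n + 1)).powerset, numChains n U ^ 2 =
        ∑ U ∈ (cellBox d n).powerset, numChains n U ^ 2 := by
      refine (sum_subset (powerset_mono.2 (cellBox_mono n.le_succ)) fun U _ hU => ?_).symm
      by_contra hne
      obtain ⟨hY, rfl⟩ :=
        isYoung_and_card_of_numChains_ne_zero (pow_ne_zero_iff two_ne_zero |>.1 hne)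
      exact hU (mem_powerset.2 hY.subset_cellBox)
    calc ∑ S ∈ (cellBox d (n + 1)).powerset, numChains (n + 1) S ^ 2
        = ∑ U ∈ (cellBox d (n + 1)).powerset, ∑ b ∈ cellBox d (n + 1) \ U,
            numChains (n + 1) (insert b U) * numChains n U := by
          simp only [numChains_succ_sq, sum_powerset_sum_mem]
          refine sum_congr rfl fun U _ => sum_congr rfl fun b hb => ?_
          rw [erase_insert (mem_sdiff.1 hb).2]
      _ = d * (n + 1) * ∑ U ∈ (cellBox d (n + 1)).powerset, numChains n U ^ 2 := by
          rw [mul_sum]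
          refine sum_congr rfl fun U _ => ?_
          by_cases h : numChains n U = 0
          · simp [h]
          · rw [← sum_mul, sum_sdiff_numChains_insert h]
            ring
      _ = d ^ (n + 1) * (n + 1)! := by
          rw [hsupp, ih, factorial_succ]
          ring

end SumOfSquares

section Fillings

open Function

variable {d : ℕ} {S : Finset (Cell d)}

@[ext]
structure StdFilling (S : Finset (Cell d)) where
  entry : Cell d → ℕ
  outside : ∀ c ∉ S, entry c = 0
  mapsTo : ∀ c ∈ S, entry c ∈ Icc 1 #S
  injOn : Set.InjOn entry S
  row : ∀ k x y, (k, x, y + 1) ∈ S → entry (k, x, y) < entry (k, x, y + 1)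
  col : ∀ k x y, (k, x + 1, y) ∈ S → entry (k, x, y) < entry (k, x + 1, y)

instance (S : Finset (Cell d)) : Finite (StdFilling S) := by
  refine Finite.of_injective (fun T (c : S) => (⟨T.entry c, T.mapsTo c c.2⟩ : Icc 1 #S))
    fun T T' h => StdFilling.ext (funext fun c => ?_)
  by_cases hc : c ∈ S
  · exact congrArg Subtype.val (congrFun h ⟨c, hc⟩)
  · rw [T.outside c hc, T'.outside c hc]

namespace StdFilling

theorem entry_le (T : StdFilling S) (c : Cell d) : T.entry c ≤ #S := by
  by_cases hc : c ∈ S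
  · exact (mem_Icc.1 (T.mapsTo c hc)).2
  · rw [T.outside c hc]
    exact Nat.zero_le _

theorem surjOn (T : StdFilling S) {m : ℕ} (hm : m ∈ Icc 1 #S) : ∃ c ∈ S, T.entry c = m := by
  obtain ⟨c, hc, h⟩ := surj_on_of_inj_on_of_card_le (fun c _ => T.entry c) T.mapsTo
    (fun _ _ h h' => T.injOn h h') (by simp) m hm
  exact ⟨c, hc, h.symm⟩

theorem mem_corners_of_entry_eq_card (T : StdFilling S) (hS : IsYoung S) {b : Cell d}
    (hb : b ∈ S) (hTb : T.entry b = #S) : b ∈ corners S := by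
  refine mem_corners.2 ⟨hb, ?_⟩
  rintro ⟨k, x, y⟩ hc x' hx y' hy
  obtain ⟨hne, hcS⟩ := mem_erase.1 hc
  refine mem_erase.2 ⟨?_, hS.mem hcS hx hy⟩
  rintro rfl
  simp only at hx hy hTb hne
  rcases hx.lt_or_eq with hx | rfl
  · have := T.col k x' y' (hS.mem hcS hx hy)
    have := T.entry_le (k, x' + 1, y')
    omega
  · rcases hy.lt_or_eq with hy | rfl
    · have := T.row k x' y' (hS.mem hcS le_rfl hy)
      have := T.entry_le (k, x', y' + 1)
      omega
    · exact hne rfl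

def restrict (T : StdFilling S) {b : Cell d} (hb : b ∈ S) (hTb : T.entry b = #S) :
    StdFilling (S.erase b) where
  entry := update T.entry b 0
  outside c hc := by
    by_cases h : c = b
    · rw [h, update_self]
    · rw [update_of_ne h, T.outside c fun h' => hc (mem_erase.2 ⟨h, h'⟩)]
  mapsTo c hc := by
    obtain ⟨h, hcS⟩ := mem_erase.1 hc
    have hne : T.entry c ≠ #S := fun h' => h (T.injOn hcS hb (h'.trans hTb.symm))
    have := mem_Icc.1 (T.mapsTo c hcS)
    rw [update_of_ne h, card_erase_of_mem hb, mem_Icc]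
    omega
  injOn := (T.injOn.mono (coe_subset.2 (erase_subset b S))).congr fun c hc =>
    (update_of_ne (ne_of_mem_erase hc) _ _).symm
  row k x y h := by
    rw [update_of_ne (ne_of_mem_erase h)]
    refine lt_of_le_of_lt ?_ (T.row k x y (mem_of_mem_erase h))
    rw [update_apply]
    split_ifs <;> simp
  col k x y h := by
    rw [update_of_ne (ne_of_mem_erase h)]
    refine lt_of_le_of_lt ?_ (T.col k x y (mem_of_mem_erase h))
    rw [update_apply]
    split_ifs <;> simp

theorem update_entry_lt_card {b : Cell d} (T : StdFilling (S.erase b)) (hb : b ∈ S) {c : Cell d}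
    (hc : c ≠ b) : update T.entry b #S c < #S := by
  have := T.entry_le c
  rw [card_erase_of_mem hb] at this
  rw [update_of_ne hc]
  have := card_pos.2 ⟨b, hb⟩
  omega

def extend {b : Cell d} (T : StdFilling (S.erase b)) (hb : b ∈ corners S) : StdFilling S where
  entry := update T.entry b #S
  outside c hc := by
    have h : c ≠ b := fun h => hc (h ▸ (mem_corners.1 hb).1)
    rw [update_of_ne h, T.outside c fun h' => hc (mem_of_mem_erase h')]
  mapsTo c hc := by
    have hbS := (mem_corners.1 hb).1
    by_cases h : c = b
    · rw [h, update_self]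
      exact mem_Icc.2 ⟨card_pos.2 ⟨b, hbS⟩, le_rfl⟩
    · have := mem_Icc.1 (T.mapsTo c (mem_erase.2 ⟨h, hc⟩))
      rw [update_of_ne h, mem_Icc]
      rw [card_erase_of_mem hbS] at this
      omega
  injOn c hc c' hc' h := by
    have hbS := (mem_corners.1 hb).1
    by_cases hcb : c = b <;> by_cases hcb' : c' = b
    · rw [hcb, hcb']
    · have := T.update_entry_lt_card hbS hcb'
      rw [← h, hcb, update_self] at this
      exact absurd this (lt_irrefl _)
    · have := T.update_entry_lt_card hbS hcb
      rw [h, hcb', update_self] at this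
      exact absurd this (lt_irrefl _)
    · rw [update_of_ne hcb, update_of_ne hcb'] at h
      exact T.injOn (mem_erase.2 ⟨hcb, hc⟩) (mem_erase.2 ⟨hcb', hc'⟩) h
  row k x y h := by
    obtain ⟨hbS, hY⟩ := mem_corners.1 hb
    by_cases h' : (k, x, y + 1) = b
    · rw [h', update_self]
      exact T.update_entry_lt_card hbS (by rw [← h']; simp)
    · have hc' : (k, x, y + 1) ∈ S.erase b := mem_erase.2 ⟨h', h⟩
      have hc := hY.mem hc' le_rfl (Nat.le_succ y)
      rw [update_of_ne (ne_of_mem_erase hc), update_of_ne h']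
      exact T.row k x y hc'
  col k x y h := by
    obtain ⟨hbS, hY⟩ := mem_corners.1 hb
    by_cases h' : (k, x + 1, y) = b
    · rw [h', update_self]
      exact T.update_entry_lt_card hbS (by rw [← h']; simp)
    · have hc' : (k, x + 1, y) ∈ S.erase b := mem_erase.2 ⟨h', h⟩
      have hc := hY.mem hc' (Nat.le_succ x) le_rfl
      rw [update_of_ne (ne_of_mem_erase hc), update_of_ne h']
      exact T.col k x y hc'

theorem card_eq_sum_corners (hS : IsYoung S) (hne : S.Nonempty) :
    Nat.card (StdFilling S) = ∑ c ∈ corners S, Nat.card (StdFilling (S.erase c)) := by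
  rw [← sum_coe_sort (corners S), ← Nat.card_sigma]
  refine (Nat.card_eq_of_bijective (fun p => p.2.extend p.1.2) ⟨?_, fun T => ?_⟩).symm
  · rintro ⟨⟨c, hc⟩, T⟩ ⟨⟨c', hc'⟩, T'⟩ h
    have hentry := congrArg StdFilling.entry h
    have hcc' : c = c' := by
      by_contra hne
      have := T'.update_entry_lt_card (mem_corners.1 hc').1 hne
      dsimp only at this
      have hval : update T'.entry c' #S c = #S := by simpa [extend] using (congrFun hentry c).symm
      omega
    subst hcc'
    have : T = T' := StdFilling.ext <| funext fun e => by
      by_cases he : e = c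
      · rw [he, T.outside c (notMem_erase c S), T'.outside c (notMem_erase c S)]
      · simpa [extend, update_of_ne he] using congrFun hentry e
    rw [this]
  · obtain ⟨b, hb, hTb⟩ := T.surjOn (mem_Icc.2 ⟨hne.card_pos, le_rfl⟩)
    refine ⟨⟨⟨b, T.mem_corners_of_entry_eq_card hS hb hTb⟩, T.restrict hb hTb⟩, ?_⟩
    ext1
    simp only [extend, restrict, update_idem, ← hTb, update_eq_self]

end StdFilling

theorem IsYoung.card_stdFilling (hS : IsYoung S) : Nat.card (StdFilling S) = numChains #S S := by
  obtain ⟨m, hm⟩ : ∃ m, #S = m := ⟨_, rfl⟩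
  induction m generalizing S with
  | zero =>
    obtain rfl := card_eq_zero.1 hm
    rw [card_empty, numChains, if_pos rfl, Nat.card_eq_one_iff_exists]
    refine ⟨⟨fun _ => 0, fun _ _ => rfl, by simp, fun _ h => by simp at h, by simp, by simp⟩,
      fun T => StdFilling.ext (funext fun c => T.outside c (notMem_empty c))⟩
  | succ m ih =>
    rw [StdFilling.card_eq_sum_corners hS (card_pos.1 (by omega)), hm, hS.numChains_succ]
    refine sum_congr rfl fun c hc => ?_
    obtain ⟨hcS, hY⟩ := mem_corners.1 hc
    have hcard : #(S.erase c) = m := by rw [card_erase_of_mem hcS, hm]; rfl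
    rw [ih hY hcard, hcard]

end Fillings

section Partitions

variable {d n : ℕ}

theorem card_filter_cellBox {N : ℕ} {p : Fin d → ℕ → ℕ} (hp : ∀ k x, p k x ≤ N) :
    #{c ∈ cellBox d N | c.2.2 < p c.1 c.2.1} = ∑ k, ∑ x ∈ range N, p k x := by
  simp only [card_filter, cellBox, sum_product]
  refine sum_congr rfl fun k _ => sum_congr rfl fun x _ => ?_
  rw [← card_filter, show {y ∈ range N | y < p k x} = range (p k x) by
    ext y; simp only [mem_filter, mem_range]; have := hp k x; omega, card_range]

namespace DPartition

theorem part_le (lam : DPartition d n) (k : Fin d) (x : ℕ) : lam.part k x ≤ n := by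
  rcases lt_or_ge x n with hx | hx
  · calc lam.part k x ≤ ∑ i ∈ range n, lam.part k i := single_le_sum (by simp) (mem_range.2 hx)
      _ ≤ ∑ k, ∑ i ∈ range n, lam.part k i :=
          single_le_sum (f := fun k => ∑ i ∈ range n, lam.part k i) (by simp) (mem_univ k)
      _ = n := lam.size
  · rw [lam.vanish k x hx]
    exact Nat.zero_le n

def cells (lam : DPartition d n) : Finset (Cell d) :=
  {c ∈ cellBox d n | c.2.2 < lam.part c.1 c.2.1}

theorem mem_cells {lam : DPartition d n} {k : Fin d} {x y : ℕ} :
    (k, x, y) ∈ lam.cells ↔ y < lam.part k x := by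
  rw [cells, mem_filter, mem_cellBox]
  refine ⟨And.right, fun h => ⟨⟨?_, h.trans_le (lam.part_le k x)⟩, h⟩⟩
  by_contra hx
  rw [lam.vanish k x (not_lt.1 hx)] at h
  exact Nat.not_lt_zero y h

theorem isYoung_cells (lam : DPartition d n) : IsYoung lam.cells := by
  rintro ⟨k, x, y⟩ hc x' hx y' hy
  rw [mem_cells] at hc ⊢
  exact lt_of_le_of_lt hy (hc.trans_le (lam.antitone k hx))

theorem card_cells (lam : DPartition d n) : #lam.cells = n := by
  rw [cells, card_filter_cellBox lam.part_le, lam.size]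

theorem cells_injective : Function.Injective (cells : DPartition d n → Finset (Cell d)) := by
  intro a b h
  have hpart : a.part = b.part := funext fun k => funext fun x =>
    eq_of_forall_lt_iff fun y => by rw [← mem_cells, ← mem_cells, h]
  obtain ⟨pa, _, _, _⟩ := a
  obtain ⟨pb, _, _, _⟩ := b
  subst hpart
  rfl

theorem exists_cells_eq {S : Finset (Cell d)} (hS : IsYoung S) (hcard : #S = n) :
    ∃ lam : DPartition d n, lam.cells = S := by
  have hle : ∀ k x, rowLen S k x ≤ n := fun k x => hcard ▸ rowLen_le_card k x
  have hcells : {c ∈ cellBox d n | c.2.2 < rowLen S c.1 c.2.1} = S := by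
    ext ⟨k, x, y⟩
    rw [mem_filter, ← hS.mem_iff_lt_rowLen]
    exact ⟨And.right, fun h => ⟨hcard ▸ hS.subset_cellBox h, h⟩⟩
  refine ⟨⟨rowLen S, hS.rowLen_antitone, fun k x hx => ?_, ?_⟩, hcells⟩
  · by_contra h
    have := (hS.lt_card (hS.mem_iff_lt_rowLen.2 (Nat.pos_of_ne_zero h))).1
    omega
  · rw [← card_filter_cellBox hle, hcells, hcard]

instance : Finite (DPartition d n) :=
  Finite.of_injective (fun lam => (⟨lam.cells, mem_powerset.2 (filter_subset _ _)⟩ :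
    (cellBox d n).powerset)) fun _ _ h => cells_injective (congrArg Subtype.val h)

def stdDTableauEquiv (lam : DPartition d n) : StdDTableau d n lam ≃ StdFilling lam.cells where
  toFun T :=
    { entry := fun c => T.entry c.1 c.2.1 c.2.2
      outside := fun _ h => T.outside _ _ _ (mem_cells.not.1 h)
      mapsTo := fun _ h => by rw [lam.card_cells]; exact T.mem _ _ _ (mem_cells.1 h)
      injOn := fun _ h _ h' e => T.inj _ _ _ _ _ _ (mem_cells.1 h) (mem_cells.1 h') e
      row := fun k x y h => T.row k x y (mem_cells.1 h)
      col := fun k x y h => T.col k x y (mem_cells.1 h) }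
  invFun F :=
    { entry := fun k x y => F.entry (k, x, y)
      outside := fun _ _ _ h => F.outside _ (mem_cells.not.2 h)
      mem := fun _ _ _ h => by simpa only [lam.card_cells] using F.mapsTo _ (mem_cells.2 h)
      inj := fun _ _ _ _ _ _ h h' e => F.injOn (mem_cells.2 h) (mem_cells.2 h') e
      surj := fun m hm => by
        obtain ⟨⟨k, x, y⟩, hc, h⟩ := F.surjOn (by rwa [lam.card_cells])
        exact ⟨k, x, y, mem_cells.1 hc, h⟩
      row := fun k x y h => F.row k x y (mem_cells.2 h)
      col := fun k x y h => F.col k x y (mem_cells.2 h) }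
  left_inv _ := rfl
  right_inv _ := rfl

instance (lam : DPartition d n) : Finite (StdDTableau d n lam) :=
  Finite.of_equiv _ lam.stdDTableauEquiv.symm

theorem card_stdDTableau (lam : DPartition d n) :
    Nat.card (StdDTableau d n lam) = numChains n lam.cells := by
  rw [Nat.card_congr lam.stdDTableauEquiv, lam.isYoung_cells.card_stdFilling, lam.card_cells]

end DPartition

theorem sum_numChains_cells [Fintype (DPartition d n)] :
    ∑ lam : DPartition d n, numChains n lam.cells ^ 2 =
      ∑ S ∈ (cellBox d n).powerset, numChains n S ^ 2 := by
  rw [← sum_image (f := fun S => numChains n S ^ 2) fun _ _ _ _ h => DPartition.cells_injective h]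
  refine sum_subset (fun _ h => ?_) fun S _ hS => ?_
  · obtain ⟨lam, -, rfl⟩ := mem_image.1 h
    exact mem_powerset.2 (filter_subset _ _)
  · by_contra hne
    obtain ⟨hY, hcard⟩ :=
      isYoung_and_card_of_numChains_ne_zero (pow_ne_zero_iff two_ne_zero |>.1 hne)
    obtain ⟨lam, rfl⟩ := DPartition.exists_cells_eq hY hcard
    exact hS (mem_image_of_mem _ (mem_univ lam))

end Partitions

/-- The sum over all `d`-partitions `λ` of `n` of the square of the number of
standard `d`-tableaux of shape `λ` equals `d^n · n!` (stated as a count of the total space of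
pairs of standard `d`-tableaux of a common shape). -/
theorem stmt5 (d n : ℕ) :
    Nat.card ((lam : DPartition d n) × (StdDTableau d n lam × StdDTableau d n lam)) =
      d ^ n * n ! := by
  have := Fintype.ofFinite (DPartition d n)
  simp only [Nat.card_sigma, Nat.card_prod, DPartition.card_stdDTableau, ← sq,
    sum_numChains_cells, sum_sq_numChains]
end

section
/- In the affine Yokonuma–Hecke algebra Ŷ_{d,n}(q), the elements X_1,…,X_n defined by X_{i+1} := g_i X_i g_i pairwise commute: X_i X_j = X_j X_i for all i, j. -/
open Finset

/-- The ground ring `ℂ[q, q⁻¹]` of Laurent polynomials, with `q` the indeterminate `T 1`. -/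
abbrev LP := LaurentPolynomial ℂ

noncomputable def qq : LP := LaurentPolynomial.T 1
noncomputable def qqinv : LP := LaurentPolynomial.T (-1)

/-- Generators of the affine Yokonuma–Hecke algebra `Ŷ_{d,n+1}(q)`: the braiding generators
`g 0, …, g (n−1)`, the framing generators `t 0, …, t n`, and `X₁^{±1}`. -/
inductive AYGen (d n : ℕ) : Type
  | g : Fin n → AYGen d n
  | t : Fin (n + 1) → AYGen d n
  | X : AYGen d n
  | Xinv : AYGen d n

/-- The free `ℂ[q,q⁻¹]`-algebra on the generators. -/
abbrev AYFree (d n : ℕ) := FreeAlgebra LP (AYGen d n)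

noncomputable def Gt (d n : ℕ) (j : Fin (n + 1)) : AYFree d n := FreeAlgebra.ι LP (AYGen.t j)
noncomputable def Gg (d n : ℕ) (i : Fin n) : AYFree d n := FreeAlgebra.ι LP (AYGen.g i)
noncomputable def GX (d n : ℕ) : AYFree d n := FreeAlgebra.ι LP AYGen.X
noncomputable def GXinv (d n : ℕ) : AYFree d n := FreeAlgebra.ι LP AYGen.Xinv

/-- The element `e_i = (1/d) Σ_{s=0}^{d−1} t_i^s t_{i+1}^{−s}` (with `t_{i+1}^{−s}`
realised as `t_{i+1}^{d−s}`, using `t_{i+1}^d = 1`), in the free algebra. -/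
noncomputable def efree (d n : ℕ) (i : Fin n) : AYFree d n :=
  (LaurentPolynomial.C ((d : ℂ)⁻¹)) •
    ∑ s ∈ range d, (Gt d n i.castSucc) ^ s * (Gt d n i.succ) ^ (d - s)

/-- The defining relations of the affine Yokonuma–Hecke algebra `Ŷ_{d,n+1}(q)`. -/
inductive AYRel (d n : ℕ) : AYFree d n → AYFree d n → Prop
  | braid_far : ∀ i j : Fin n, (i : ℕ) + 1 < (j : ℕ) →
      AYRel d n (Gg d n i * Gg d n j) (Gg d n j * Gg d n i)
  | braid : ∀ i j : Fin n, (i : ℕ) + 1 = (j : ℕ) →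
      AYRel d n (Gg d n i * Gg d n j * Gg d n i) (Gg d n j * Gg d n i * Gg d n j)
  | comm_t : ∀ j k : Fin (n + 1), AYRel d n (Gt d n j * Gt d n k) (Gt d n k * Gt d n j)
  | tg : ∀ (i : Fin n) (j : Fin (n + 1)),
      AYRel d n (Gt d n j * Gg d n i)
        (Gg d n i * Gt d n (Equiv.swap i.castSucc i.succ j))
  | t_order : ∀ j : Fin (n + 1), AYRel d n ((Gt d n j) ^ d) 1
  | quad : ∀ i : Fin n,
      AYRel d n (Gg d n i * Gg d n i) (1 + (qq - qqinv) • (efree d n i * Gg d n i))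
  | X_inv_left : AYRel d n (GX d n * GXinv d n) 1
  | X_inv_right : AYRel d n (GXinv d n * GX d n) 1
  | XgXg : ∀ i : Fin n, (i : ℕ) = 0 →
      AYRel d n (GX d n * Gg d n i * GX d n * Gg d n i)
        (Gg d n i * GX d n * Gg d n i * GX d n)
  | Xg : ∀ i : Fin n, (i : ℕ) ≠ 0 →
      AYRel d n (GX d n * Gg d n i) (Gg d n i * GX d n)
  | Xt : ∀ j : Fin (n + 1), AYRel d n (GX d n * Gt d n j) (Gt d n j * GX d n)

/-- The affine Yokonuma–Hecke algebra `Ŷ_{d,n+1}(q)` over `ℂ[q,q⁻¹]`. -/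
abbrev AYH (d n : ℕ) := RingQuot (AYRel d n)

noncomputable def tA (d n : ℕ) (j : Fin (n + 1)) : AYH d n :=
  RingQuot.mkAlgHom LP (AYRel d n) (Gt d n j)

noncomputable def gA (d n : ℕ) (i : Fin n) : AYH d n :=
  RingQuot.mkAlgHom LP (AYRel d n) (Gg d n i)

noncomputable def XA (d n : ℕ) : AYH d n :=
  RingQuot.mkAlgHom LP (AYRel d n) (GX d n)

/-- The commuting family `X_1, X_2, …` defined by `X_{i+1} = g_i X_i g_i`
(0-indexed: `Xseq d n a` is `X_{a+1}`; junk value `1` for `a > n`). -/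
noncomputable def Xseq (d n : ℕ) : ℕ → AYH d n
  | 0 => XA d n
  | a + 1 => if h : a < n then gA d n ⟨a, h⟩ * Xseq d n a * gA d n ⟨a, h⟩ else 1

/-
Indices as in `Xseq`: `X_0 = X` and `X_{a+1} = g_a X_a g_a`. A generator `g_k` with `a < k`
commutes with `X_a`, because it commutes with `X` and with `g_0, …, g_{a-1}`. Adjacent elements
commute by induction: `X_0 X_1 = X_1 X_0` is the defining relation `X g_0 X g_0 = g_0 X g_0 X`,
and the induction step is a braid-relation computation valid in any monoid. For `a < b`, `X_a`
commutes with `X_b` by induction on `b`, since conjugation by `g_{b-1}` fixes `X_a`.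
-/

theorem Commute.conj_of_braid {M : Type*} [Monoid M] {g k x : M}
    (hbraid : g * k * g = k * g * k) (hkx : Commute k x) (hx : Commute x (g * x * g)) :
    Commute (g * x * g) (k * (g * x * g) * k) := by
  have hx' : x * g * x * g = g * x * g * x := by simpa only [mul_assoc] using hx.eq
  calc g * x * g * (k * (g * x * g) * k)
      = g * x * (g * k * g) * x * g * k := by simp only [mul_assoc]
    _ = g * (x * k) * g * (k * x) * g * k := by rw [hbraid]; simp only [mul_assoc]
    _ = g * (k * x) * g * (x * k) * g * k := by rw [hkx.eq]
    _ = g * k * x * g * x * (g * k * g) := by rw [hbraid]; simp only [mul_assoc]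
    _ = g * k * (g * x * g * x) * k * g := by rw [← hx']; simp only [mul_assoc]
    _ = g * k * g * (x * g * x * k * g) := by simp only [mul_assoc]
    _ = k * g * (k * x) * g * (x * k) * g := by rw [hbraid]; simp only [mul_assoc]
    _ = k * g * (x * k) * g * (k * x) * g := by rw [hkx.eq]
    _ = k * g * x * (k * g * k) * x * g := by simp only [mul_assoc]
    _ = k * (g * x * g) * k * (g * x * g) := by rw [← hbraid]; simp only [mul_assoc]

section Relations

variable {d n : ℕ}

theorem commute_gA_gA_of_succ_lt {i j : Fin n} (h : (i : ℕ) + 1 < j) :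
    Commute (gA d n i) (gA d n j) := by
  simpa only [gA, map_mul, commute_iff_eq] using
    RingQuot.mkAlgHom_rel LP (AYRel.braid_far (d := d) i j h)

theorem gA_mul_gA_mul_gA_of_succ_eq {i j : Fin n} (h : (i : ℕ) + 1 = j) :
    gA d n i * gA d n j * gA d n i = gA d n j * gA d n i * gA d n j := by
  simpa only [gA, map_mul] using RingQuot.mkAlgHom_rel LP (AYRel.braid (d := d) i j h)

theorem commute_XA_gA {i : Fin n} (h : (i : ℕ) ≠ 0) : Commute (XA d n) (gA d n i) := by
  simpa only [gA, XA, map_mul, commute_iff_eq] using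
    RingQuot.mkAlgHom_rel LP (AYRel.Xg (d := d) i h)

theorem commute_XA_gA_mul_XA_mul_gA {i : Fin n} (h : (i : ℕ) = 0) :
    Commute (XA d n) (gA d n i * XA d n * gA d n i) := by
  simpa only [gA, XA, map_mul, commute_iff_eq, mul_assoc] using
    RingQuot.mkAlgHom_rel LP (AYRel.XgXg (d := d) i h)

theorem Xseq_succ {a : ℕ} (h : a < n) :
    Xseq d n (a + 1) = gA d n ⟨a, h⟩ * Xseq d n a * gA d n ⟨a, h⟩ := by
  rw [Xseq, dif_pos h]

theorem commute_gA_Xseq_of_lt {k : Fin n} : ∀ {a : ℕ}, a < k → Commute (gA d n k) (Xseq d n a)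
  | 0, h => (commute_XA_gA h.ne').symm
  | a + 1, h => by
    have ha : a < n := by omega
    have hg : Commute (gA d n k) (gA d n ⟨a, ha⟩) := (commute_gA_gA_of_succ_lt h).symm
    rw [Xseq_succ ha]
    exact (hg.mul_right (commute_gA_Xseq_of_lt (by omega))).mul_right hg

theorem commute_Xseq_Xseq_succ : ∀ {a : ℕ}, a < n → Commute (Xseq d n a) (Xseq d n (a + 1))
  | 0, h => by
    rw [Xseq_succ h]
    exact commute_XA_gA_mul_XA_mul_gA rfl
  | a + 1, h => by
    have ha : a < n := by omega
    rw [Xseq_succ h, Xseq_succ ha]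
    refine Commute.conj_of_braid (gA_mul_gA_mul_gA_of_succ_eq rfl)
      (commute_gA_Xseq_of_lt (Nat.lt_succ_self a)) ?_
    rw [← Xseq_succ ha]
    exact commute_Xseq_Xseq_succ ha

theorem commute_Xseq_of_lt {a b : ℕ} (hab : a < b) (hb : b ≤ n) :
    Commute (Xseq d n a) (Xseq d n b) := by
  induction b, hab using Nat.le_induction with
  | base => exact commute_Xseq_Xseq_succ hb
  | succ b hab ih =>
    have hbn : b < n := hb
    rw [Xseq_succ hbn]
    have hg := (commute_gA_Xseq_of_lt (d := d) (k := ⟨b, hbn⟩) hab).symm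
    exact (hg.mul_right (ih hbn.le)).mul_right hg

end Relations

theorem stmt10_general (d n : ℕ) (a b : ℕ) (ha : a ≤ n) (hb : b ≤ n) :
    Xseq d n a * Xseq d n b = Xseq d n b * Xseq d n a := by
  rcases lt_trichotomy a b with hab | rfl | hba
  · exact (commute_Xseq_of_lt hab hb).eq
  · rfl
  · exact (commute_Xseq_of_lt hba ha).symm.eq

/-- In the affine Yokonuma–Hecke algebra `Ŷ_{d,n+1}(q)`, the elements
`X_1, …, X_{n+1}` defined by `X_{i+1} = g_i X_i g_i` pairwise commute. -/
theorem stmt10 (d n : ℕ) (hd : 1 ≤ d) (a b : ℕ) (ha : a ≤ n) (hb : b ≤ n) :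
    Xseq d n a * Xseq d n b = Xseq d n b * Xseq d n a :=
  stmt10_general d n a b ha hb
end

section
/- Let 𝒯 be a standard d-tableau and suppose entries j < k lie in the same component and the same diagonal (p(𝒯|j) = p(𝒯|k) and y−x equal). Then k − j ≥ 3, and there exist i₁, i₂ with j+1 ≤ i₁, i₂ ≤ k−1 lying in the same component such that the node of i₁ has diagonal value one less and the node of i₂ has diagonal value one more than that of j. -/
open Finset

/-!
Entries of a standard tableau increase weakly along the product order on nodes. If two entries
`a < b` of one component sit on the same diagonal, this forces the node of `b` strictly below and
to the right of that of `a`, so the nodes just below and just right of `a` lie in the shape; their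
entries are two distinct numbers strictly between `a` and `b`, on the diagonals one less and one
more.
-/

namespace StdDTableau

variable {d n : ℕ} {lam : DPartition d n} (T : StdDTableau d n lam) (k : Fin d)

lemma entry_le_entry_right {x y y' : ℕ} (hy : y ≤ y') (h : y' < lam.part k x) :
    T.entry k x y ≤ T.entry k x y' := by
  induction y', hy using Nat.le_induction with
  | base => exact le_rfl
  | succ m _ ih => exact (ih (by omega)).trans (T.row k x m h).le

lemma entry_le_entry_down {x x' y : ℕ} (hx : x ≤ x') (h : y < lam.part k x') :
    T.entry k x y ≤ T.entry k x' y := by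
  induction x', hx using Nat.le_induction with
  | base => exact le_rfl
  | succ m _ ih => exact (ih (h.trans_le (lam.antitone k m.le_succ))).trans (T.col k m y h).le

lemma entry_le_entry {x y x' y' : ℕ} (hx : x ≤ x') (hy : y ≤ y') (h : y' < lam.part k x') :
    T.entry k x y ≤ T.entry k x' y' :=
  (T.entry_le_entry_right k hy (h.trans_le (lam.antitone k hx))).trans
    (T.entry_le_entry_down k hx h)

lemma entry_lt_entry {x y x' y' : ℕ} (hx : x ≤ x') (hy : y ≤ y') (hne : (x, y) ≠ (x', y'))
    (h : y' < lam.part k x') : T.entry k x y < T.entry k x' y' := by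
  refine (T.entry_le_entry k hx hy h).lt_of_ne fun heq => hne ?_
  have hxy : y < lam.part k x := (hy.trans_lt h).trans_le (lam.antitone k hx)
  simpa using T.inj k x y k x' y' hxy h heq

lemma row_lt_of_entry_lt_of_diag_eq {x y x' y' : ℕ} (h : y < lam.part k x)
    (hlt : T.entry k x y < T.entry k x' y') (hdiag : (y : ℤ) - x = (y' : ℤ) - x') : x < x' := by
  by_contra! hx
  exact (T.entry_le_entry k hx (by omega) h).not_gt hlt

end StdDTableau

/-- If in a standard `d`-tableau the entries `j < k` lie in the same component
and on the same diagonal, then `k − j ≥ 3`, and there exist entries `i₁, i₂` with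
`j + 1 ≤ i₁, i₂ ≤ k − 1` lying in the same component, whose nodes have diagonal value
one less, resp. one more, than that of the node of `j`. -/
theorem stmt14 (d n : ℕ) (lam : DPartition d n) (T : StdDTableau d n lam)
    (k : Fin d) (xj yj xk yk : ℕ)
    (hj : yj < lam.part k xj) (hk : yk < lam.part k xk)
    (hlt : T.entry k xj yj < T.entry k xk yk)
    (hdiag : (yj : ℤ) - (xj : ℤ) = (yk : ℤ) - (xk : ℤ)) :
    T.entry k xj yj + 3 ≤ T.entry k xk yk ∧
    (∃ x y, y < lam.part k x ∧
        T.entry k xj yj + 1 ≤ T.entry k x y ∧ T.entry k x y + 1 ≤ T.entry k xk yk ∧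
        (y : ℤ) - (x : ℤ) = (yj : ℤ) - (xj : ℤ) - 1) ∧
    (∃ x y, y < lam.part k x ∧
        T.entry k xj yj + 1 ≤ T.entry k x y ∧ T.entry k x y + 1 ≤ T.entry k xk yk ∧
        (y : ℤ) - (x : ℤ) = (yj : ℤ) - (xj : ℤ) + 1) := by
  have hx : xj < xk := T.row_lt_of_entry_lt_of_diag_eq k hj hlt hdiag
  have hy : yj < yk := by omega
  have hbelow : yj < lam.part k (xj + 1) := (hy.trans hk).trans_le (lam.antitone k hx)
  have hright : yj + 1 < lam.part k xj := hy.succ_le.trans_lt (hk.trans_le (lam.antitone k hx.le))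
  have hbelow_lo : T.entry k xj yj < T.entry k (xj + 1) yj := T.col k xj yj hbelow
  have hbelow_hi : T.entry k (xj + 1) yj < T.entry k xk yk :=
    T.entry_lt_entry k hx hy.le (by simp [hy.ne]) hk
  have hright_lo : T.entry k xj yj < T.entry k xj (yj + 1) := T.row k xj yj hright
  have hright_hi : T.entry k xj (yj + 1) < T.entry k xk yk :=
    T.entry_lt_entry k hx.le hy (by simp [hx.ne]) hk
  have hne : T.entry k (xj + 1) yj ≠ T.entry k xj (yj + 1) := fun h => by
    simpa using T.inj k (xj + 1) yj k xj (yj + 1) hbelow hright h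
  refine ⟨by omega, ⟨xj + 1, yj, hbelow, hbelow_lo, hbelow_hi, by push_cast; ring⟩,
    ⟨xj, yj + 1, hright, hright_lo, hright_hi, by push_cast; ring⟩⟩
end
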